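/- arXiv:math/0701755 — 2 statements merged into one kernel-verified Lean document; each statement's English description precedes it below -/
import Mathlib

section
/- An integer d is a change diagonal of a partition λ (i.e., there exists a partition μ ~ λ with Δ(λ,μ) = d) if and only if the pair (ρ_d(λ) − ρ_{d−1}(λ), ρ_{d+1}(λ) − ρ_d(λ)) equals (1,0) or (0,1) when d < 0, equals (1,−1) or (0,0) when d = 0, and equals (0,−1) or (−1,0) when d > 0. -/
/-!
Encode `λ` by the strictly decreasing sequence `β r = λ_r - r`. A cell of content `d` can
be added in row `r` iff `β r = d` and `d + 1 ∉ β(ℕ)`, and removed from row `r` iff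
`β r = d + 1` and `d ∉ β(ℕ)`; so `d` is a change diagonal iff exactly one of `d`, `d + 1` lies in `β(ℕ)`.
The cells of content `d` sit in the rows `r ≥ -d` with `β r > d`, whence
`ρ_d = #{r | β r ≥ d + 1} + min d 0` and `ρ_d - ρ_{d-1} = [d ≤ 0] - [d ∈ β(ℕ)]`;
the table of the theorem is this formula read at `d` and at `d + 1`.
-/

structure Ptn where
  parts : ℕ → ℕ
  antitone : ∀ m n : ℕ, m ≤ n → parts n ≤ parts m
  finite : ∃ N : ℕ, ∀ n : ℕ, N ≤ n → parts n = 0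

namespace Ptn

/-- 1-indexed Young diagram of a partition. -/
def ycells (l : Ptn) : Set (ℕ × ℕ) :=
  {p | 1 ≤ p.1 ∧ 1 ≤ p.2 ∧ p.2 ≤ l.parts (p.1 - 1)}

/-- number of cells, `|λ|`. -/
noncomputable def size (l : Ptn) : ℕ := l.ycells.ncard

/-- number of nonzero parts, `ℓ(λ)`. -/
noncomputable def length (l : Ptn) : ℕ := {i : ℕ | l.parts i ≠ 0}.ncard

/-- `λ` and `μ` differ by a square. -/
def Differs (l m : Ptn) : Prop :=
  ∃ i : ℕ, (l.parts i = m.parts i + 1 ∨ m.parts i = l.parts i + 1) ∧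
    ∀ k : ℕ, k ≠ i → l.parts k = m.parts k

/-- `λ` and `μ` differ by a square whose content is `d`. -/
def DiffersAt (l m : Ptn) (d : ℤ) : Prop :=
  ∃ i : ℕ, (l.parts i = m.parts i + 1 ∨ m.parts i = l.parts i + 1) ∧
    (∀ k : ℕ, k ≠ i → l.parts k = m.parts k) ∧
    (max (l.parts i) (m.parts i) : ℤ) - 1 - (i : ℤ) = d

/-- `ρ_d(λ)`: number of cells of content `d`. -/
noncomputable def rho (l : Ptn) (d : ℤ) : ℕ :=
  {p ∈ l.ycells | (p.2 : ℤ) - (p.1 : ℤ) = d}.ncard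

/-- rank: number of diagonal cells. -/
noncomputable def rank (l : Ptn) : ℕ := {i : ℕ | i < l.parts i}.ncard

/-- conjugate partition parts (0-indexed). -/
noncomputable def conj (l : Ptn) (k : ℕ) : ℕ := {i : ℕ | k < l.parts i}.ncard

end Ptn

/-- `R_d(T)`: number of points of `T` of content `d`. -/
noncomputable def Rd (T : Set (ℕ × ℕ)) (d : ℤ) : ℕ :=
  {p ∈ T | (p.2 : ℤ) - (p.1 : ℤ) = d}.ncard

/-- `c` is the `(a,b)`-complement of `l`. -/
def IsComplementOf (a b : ℕ) (c l : Ptn) : Prop :=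
  ∀ k : ℕ, c.parts k = if k < a then b - l.parts (a - 1 - k) else 0

namespace Ptn

/-- `l.beta r = λ_r - r` is the content of the first cell outside the diagram in row `r`
(0-indexed). -/
def beta (l : Ptn) (r : ℕ) : ℤ := l.parts r - r

lemma beta_strictAnti (l : Ptn) : StrictAnti l.beta := by
  intro m n hmn
  have := l.antitone m n hmn.le
  simp only [beta]
  omega

lemma finite_setOf_le_beta (l : Ptn) (c : ℤ) : {r | c ≤ l.beta r}.Finite := by
  obtain ⟨N, hN⟩ := l.finite
  refine (Set.finite_Iio (N + (-c).toNat + 1)).subset fun r hr => ?_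
  by_contra hrN
  simp only [Set.mem_Iio, not_lt] at hrN
  simp only [Set.mem_ofPred_eq, beta, hN r (by omega)] at hr
  omega

noncomputable def betaCount (l : Ptn) (c : ℤ) : ℕ := {r | c ≤ l.beta r}.ncard

lemma betaCount_eq_add_ite (l : Ptn) (c : ℤ)
    [Decidable (c ∈ Set.range l.beta)] :
    l.betaCount c = l.betaCount (c + 1) + if c ∈ Set.range l.beta then 1 else 0 := by
  have hunion : {r | c ≤ l.beta r} = {r | c + 1 ≤ l.beta r} ∪ l.beta ⁻¹' {c} := by
    ext r
    simp only [Set.mem_ofPred_eq, Set.mem_union, Set.mem_preimage, Set.mem_singleton_iff]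
    omega
  have hdisj : Disjoint {r | c + 1 ≤ l.beta r} (l.beta ⁻¹' {c}) :=
    Set.disjoint_left.2 fun r h₁ h₂ => by
      simp only [Set.mem_ofPred_eq, Set.mem_preimage, Set.mem_singleton_iff] at h₁ h₂
      omega
  rw [betaCount, betaCount, hunion, Set.ncard_union_eq hdisj (l.finite_setOf_le_beta _)
    ((l.finite_setOf_le_beta c).subset fun r hr => le_of_eq (Set.mem_singleton_iff.1 hr).symm)]
  split_ifs with hc
  · obtain ⟨r, rfl⟩ := hc
    rw [← Set.image_singleton, l.beta_strictAnti.injective.preimage_image, Set.ncard_singleton]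
  · rw [Set.preimage_singleton_eq_empty.2 hc, Set.ncard_empty]

lemma rho_eq_ncard_rows (l : Ptn) (d : ℤ) :
    l.rho d = {r : ℕ | d + 1 ≤ l.beta r ∧ -d ≤ r}.ncard := by
  have hcells : {p ∈ l.ycells | (p.2 : ℤ) - (p.1 : ℤ) = d} =
      (fun r : ℕ => (r + 1, ((r : ℤ) + 1 + d).toNat)) ''
        {r | d + 1 ≤ l.beta r ∧ -d ≤ r} := by
    ext ⟨i, j⟩
    simp only [ycells, beta, Set.mem_ofPred_eq, Set.mem_image, Prod.mk.injEq]
    constructor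
    · rintro ⟨⟨hi, hj, hjl⟩, hd⟩
      exact ⟨i - 1, ⟨by omega, by omega⟩, by omega, by omega⟩
    · rintro ⟨r, ⟨hr, hrd⟩, rfl, rfl⟩
      simp only [Nat.add_sub_cancel]
      omega
  rw [rho, hcells, Set.ncard_image_of_injective _ fun r s h => by simpa using congrArg Prod.fst h]

/-- For `d < 0` the first `-d` rows have `beta r > d` but no cell of content `d`. -/
lemma rho_eq_betaCount_add_min (l : Ptn) (d : ℤ) :
    (l.rho d : ℤ) = l.betaCount (d + 1) + min d 0 := by
  have hsub : Set.Iio (-d).toNat ⊆ {r | d + 1 ≤ l.beta r} := fun r hr => by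
    have := l.antitone r (-d).toNat (le_of_lt hr)
    simp only [Set.mem_Iio] at hr
    simp only [Set.mem_ofPred_eq, beta]
    omega
  have hrows : {r : ℕ | d + 1 ≤ l.beta r ∧ -d ≤ r} =
      {r | d + 1 ≤ l.beta r} \ Set.Iio (-d).toNat := by
    ext r
    simp only [Set.mem_ofPred_eq, Set.mem_sdiff, Set.mem_Iio, not_lt]
    omega
  have hcard := Set.ncard_sdiff_add_ncard_of_subset hsub (l.finite_setOf_le_beta _)
  rw [Set.ncard_Iio_nat] at hcard
  rw [rho_eq_ncard_rows, hrows, betaCount, ← hcard]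
  omega

lemma rho_sub_rho_sub_one (l : Ptn) (d : ℤ) [Decidable (d ∈ Set.range l.beta)] :
    (l.rho d : ℤ) - l.rho (d - 1) =
      (if d ≤ 0 then 1 else 0) - if d ∈ Set.range l.beta then 1 else 0 := by
  rw [rho_eq_betaCount_add_min, rho_eq_betaCount_add_min, sub_add_cancel,
    l.betaCount_eq_add_ite d]
  split_ifs <;> omega

def updatePart (l : Ptn) (i n : ℕ) (hprev : 0 < i → n ≤ l.parts (i - 1))
    (hnext : l.parts (i + 1) ≤ n) : Ptn where
  parts := Function.update l.parts i n
  antitone a b hab := by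
    simp only [Function.update_apply]
    split_ifs with hb ha ha
    · exact le_rfl
    · exact (hprev (by omega)).trans (l.antitone _ _ (by omega))
    · exact (l.antitone _ _ (by omega)).trans hnext
    · exact l.antitone a b hab
  finite := by
    obtain ⟨N, hN⟩ := l.finite
    exact ⟨max N (i + 1), fun k hk => by
      rw [Function.update_of_ne (by omega)]
      exact hN k (by omega)⟩

lemma exists_differsAt_of_mem_range_beta {l : Ptn} {d : ℤ} (hd : d ∈ Set.range l.beta)
    (hd₁ : d + 1 ∉ Set.range l.beta) : ∃ m : Ptn, l.DiffersAt m d := by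
  obtain ⟨i, hi⟩ := hd
  have hprev : 0 < i → l.parts i + 1 ≤ l.parts (i - 1) := fun hi₀ => by
    have hlt := l.beta_strictAnti (show i - 1 < i by omega)
    have hne : l.beta (i - 1) ≠ d + 1 := fun h => hd₁ ⟨i - 1, h⟩
    simp only [beta] at hi hlt hne
    omega
  refine ⟨l.updatePart i (l.parts i + 1) hprev
    ((l.antitone i (i + 1) (by omega)).trans (by omega)),
    i, Or.inr ?_, fun k hk => ?_, ?_⟩
  · simp [updatePart]
  · simp [updatePart, hk]
  · simp only [updatePart, Function.update_self, beta] at hi ⊢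
    omega

lemma exists_differsAt_of_add_one_mem_range_beta {l : Ptn} {d : ℤ}
    (hd₁ : d + 1 ∈ Set.range l.beta) (hd : d ∉ Set.range l.beta) :
    ∃ m : Ptn, l.DiffersAt m d := by
  obtain ⟨i, hi⟩ := hd₁
  have hnext : l.parts (i + 1) + 1 ≤ l.parts i := by
    have hlt := l.beta_strictAnti (show i < i + 1 by omega)
    have hne : l.beta (i + 1) ≠ d := fun h => hd ⟨i + 1, h⟩
    simp only [beta] at hi hlt hne
    omega
  refine ⟨l.updatePart i (l.parts i - 1)
    (fun _ => (Nat.sub_le _ _).trans (l.antitone _ _ (by omega)))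
    (show l.parts (i + 1) ≤ l.parts i - 1 by omega), i, Or.inl ?_, fun k hk => ?_, ?_⟩
  · simp only [updatePart, Function.update_self]
    omega
  · simp [updatePart, hk]
  · simp only [updatePart, Function.update_self, beta] at hi ⊢
    omega

lemma xor_mem_range_beta_of_differsAt {l m : Ptn} {d : ℤ} (h : l.DiffersAt m d) :
    Xor (d ∈ Set.range l.beta) (d + 1 ∈ Set.range l.beta) := by
  obtain ⟨i, hi | hi, hk, hd⟩ := h
  · have hbeta : l.beta i = d + 1 := by simp only [beta]; omega
    refine Or.inr ⟨⟨i, hbeta⟩, ?_⟩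
    rintro ⟨j, hj⟩
    have hnext : l.beta (i + 1) < d := by
      have := m.antitone i (i + 1) (by omega)
      simp only [beta, hk (i + 1) (by omega)]
      omega
    have := l.beta_strictAnti.lt_iff_gt.1 (show l.beta j < l.beta i by omega)
    have := l.beta_strictAnti.lt_iff_gt.1 (show l.beta (i + 1) < l.beta j by omega)
    omega
  · have hbeta : l.beta i = d := by simp only [beta]; omega
    refine Or.inl ⟨⟨i, hbeta⟩, ?_⟩
    rintro ⟨j, hj⟩
    have hji := l.beta_strictAnti.lt_iff_gt.1 (show l.beta i < l.beta j by omega)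
    have hprev : d + 1 < l.beta (i - 1) := by
      have := m.antitone (i - 1) i (by omega)
      simp only [beta, hk (i - 1) (by omega)]
      omega
    have := l.beta_strictAnti.lt_iff_gt.1 (show l.beta j < l.beta (i - 1) by omega)
    omega

lemma exists_differsAt_iff_xor (l : Ptn) (d : ℤ) :
    (∃ m : Ptn, l.DiffersAt m d) ↔ Xor (d ∈ Set.range l.beta) (d + 1 ∈ Set.range l.beta) :=
  ⟨fun ⟨_, h⟩ => xor_mem_range_beta_of_differsAt h, fun h => h.elim
    (fun ⟨hd, hd₁⟩ => exists_differsAt_of_mem_range_beta hd hd₁)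
    (fun ⟨hd₁, hd⟩ => exists_differsAt_of_add_one_mem_range_beta hd₁ hd)⟩

end Ptn

/-- `d` is a change diagonal of `λ` iff the successive differences of `ρ` around `d`
take the prescribed values. -/
theorem statement9 (l : Ptn) (d : ℤ) :
    (∃ m : Ptn, l.DiffersAt m d) ↔
      ((d < 0 →
          (((l.rho d : ℤ) - (l.rho (d - 1) : ℤ), (l.rho (d + 1) : ℤ) - (l.rho d : ℤ)) = (1, 0) ∨
           ((l.rho d : ℤ) - (l.rho (d - 1) : ℤ), (l.rho (d + 1) : ℤ) - (l.rho d : ℤ)) = (0, 1))) ∧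
       (d = 0 →
          (((l.rho d : ℤ) - (l.rho (d - 1) : ℤ), (l.rho (d + 1) : ℤ) - (l.rho d : ℤ)) = (1, -1) ∨
           ((l.rho d : ℤ) - (l.rho (d - 1) : ℤ), (l.rho (d + 1) : ℤ) - (l.rho d : ℤ)) = (0, 0))) ∧
       (0 < d →
          (((l.rho d : ℤ) - (l.rho (d - 1) : ℤ), (l.rho (d + 1) : ℤ) - (l.rho d : ℤ)) = (0, -1) ∨
           ((l.rho d : ℤ) - (l.rho (d - 1) : ℤ), (l.rho (d + 1) : ℤ) - (l.rho d : ℤ)) = (-1, 0)))) := by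
  classical
  have h₁ := l.rho_sub_rho_sub_one d
  have h₂ := l.rho_sub_rho_sub_one (d + 1)
  rw [add_sub_cancel_right] at h₂
  rw [l.exists_differsAt_iff_xor d, h₁, h₂]
  by_cases hd : d ∈ Set.range l.beta <;> by_cases hd₁ : d + 1 ∈ Set.range l.beta <;>
    simp only [Xor, hd, hd₁, Prod.mk.injEq, if_true, if_false, not_true_eq_false,
      not_false_eq_true, and_true, and_false, or_false, false_or, true_iff, false_iff] <;>
    split_ifs <;> omega
end

section
/- For any tuple P of osculating paths in an a×b rectangle with boundary point pair (α,β), the total number of vacancies of P equals |λ_{a,b,α,β}| + χ(P), where χ(P) is the number of osculations of P. Consequently the vacancy-osculation set Z(P) = N(P) ∪ X(P) satisfies |Z(P)| = |λ_{a,b,α,β}| + 2χ(P). -/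
/-- `mu` has rank `r` and Frobenius coordinates `(g 0,...,g (r-1) | d 0,...,d (r-1))`. -/
def IsFrobenius (mu : Ptn) (r : ℕ) (g d : ℕ → ℕ) : Prop :=
  mu.rank = r ∧ (∀ i : ℕ, i < r → mu.parts i = g i + i + 1) ∧
    (∀ i : ℕ, i < r → mu.conj i = d i + i + 1)

/-- `lam = λ_{a,b,α,β}`, the `(a,b)`-complement of the partition with Frobenius
notation `(b-β₁,...,b-β_r | a-α₁,...,a-α_r)`. -/
def IsBdryPtn (a b : ℕ) (α β : Finset ℕ) (lam : Ptn) : Prop :=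
  ∃ mu : Ptn,
    IsFrobenius mu α.card (fun i => b - (β.sort (· ≤ ·)).getD i 0)
      (fun i => a - (α.sort (· ≤ ·)).getD i 0) ∧
    IsComplementOf a b lam mu
/-- A unit step rightwards `(0,1)` or upwards `(-1,0)` (matrix coordinates). -/
def IsStep (x y : ℤ × ℤ) : Prop := y = (x.1, x.2 + 1) ∨ y = (x.1 - 1, x.2)

/-- `p` is a path from `s` to `t` taking only steps `(0,1)` or `(-1,0)`. -/
def IsPathFT (p : List (ℤ × ℤ)) (s t : ℤ × ℤ) : Prop :=
  p.head? = some s ∧ p.getLast? = some t ∧ p.Chain' IsStep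

/-- Paths `P` (the lower path) and `Q` (the upper path) osculate: at any shared
point the local configuration is fixed, so they neither cross nor share edges. -/
def Osc (P Q : List (ℤ × ℤ)) : Prop :=
  ∀ l l' : ℕ, l < P.length → l' < Q.length →
    P.getD l (0, 0) = Q.getD l' (0, 0) →
      0 < l ∧ l + 1 < P.length ∧
      P.getD (l - 1) (0, 0) = ((P.getD l (0, 0)).1, (P.getD l (0, 0)).2 - 1) ∧
      P.getD (l + 1) (0, 0) = ((P.getD l (0, 0)).1 - 1, (P.getD l (0, 0)).2) ∧
      (0 < l' → Q.getD (l' - 1) (0, 0) = ((P.getD l (0, 0)).1 + 1, (P.getD l (0, 0)).2)) ∧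
      (l' + 1 < Q.length → Q.getD (l' + 1) (0, 0) = ((P.getD l (0, 0)).1, (P.getD l (0, 0)).2 + 1))

/-- `P` is a tuple of osculating paths in the `a × b` rectangle with boundary pair `(α,β)`:
the `k`-th path runs from `(a, β_k)` to `(α_k, b)` and consecutive paths osculate. -/
def IsOscTuple (a b : ℕ) (α β : Finset ℕ) (P : List (List (ℤ × ℤ))) : Prop :=
  α ⊆ Finset.Icc 1 a ∧ β ⊆ Finset.Icc 1 b ∧ α.card = β.card ∧ P.length = α.card ∧
  (∀ k : ℕ, k < P.length →
    IsPathFT (P.getD k []) ((a : ℤ), (((β.sort (· ≤ ·)).getD k 0 : ℕ) : ℤ))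
      ((((α.sort (· ≤ ·)).getD k 0 : ℕ) : ℤ), (b : ℤ))) ∧
  (∀ k : ℕ, k + 1 < P.length → Osc (P.getD k []) (P.getD (k + 1) []))

/-- The set of lattice points of the `a × b` rectangle. -/
def rectZ (a b : ℕ) : Set (ℤ × ℤ) :=
  {v | 1 ≤ v.1 ∧ v.1 ≤ (a : ℤ) ∧ 1 ≤ v.2 ∧ v.2 ≤ (b : ℤ)}

/-- The number of paths of the tuple `P` passing through the point `v`. -/
noncomputable def passCount (P : List (List (ℤ × ℤ))) (v : ℤ × ℤ) : ℕ :=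
  {k : ℕ | k < P.length ∧ v ∈ P.getD k []}.ncard

/-- The vacancy-osculation set of `P`: points through which zero or two paths pass. -/
def Zset (a b : ℕ) (P : List (List (ℤ × ℤ))) : Set (ℤ × ℤ) :=
  {v ∈ rectZ a b | passCount P v = 0 ∨ passCount P v = 2}


/-!
Count incidences between lattice points and paths. The `k`-th path has
`(a - α_k) + (b - β_k) + 1` points; these are the hook lengths of the diagonal cells of the
partition `μ` with Frobenius coordinates `(b - β | a - α)`, so the path lengths add up to
`|μ| = ab - |λ|`. Osculating paths never cross, so along a line of constant content the paths
are ordered, and a point lying on two non-consecutive paths would lie on three consecutive ones,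
which the local shape of an osculation forbids. Hence every point lies on at most two paths, and
with `nᵢ` the number of points on exactly `i` paths, `n₀ + n₁ + n₂ = ab` and
`n₁ + 2 n₂ = ab - |λ|`, so `n₀ = |λ| + n₂`.
-/

open Finset

lemma Set.Finite.eq_Iio_ncard_of_isLowerSet {S : Set ℕ} (hfin : S.Finite) (hS : IsLowerSet S) :
    S = Set.Iio S.ncard := by
  rcases hS.eq_univ_or_Iio with h | ⟨n, rfl⟩
  · exact absurd (h ▸ hfin) Set.infinite_univ
  · rw [Set.ncard_Iio_nat]

namespace Ptn

variable (l : Ptn)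

lemma finite_setOf_lt_parts (j : ℕ) : {i | j < l.parts i}.Finite := by
  obtain ⟨N, hN⟩ := l.finite
  refine (Set.finite_Iio N).subset fun i hi => ?_
  by_contra hiN
  have := hN i (not_lt.1 hiN)
  simp_all

lemma lt_parts_iff_lt_conj (i j : ℕ) : j < l.parts i ↔ i < l.conj j := by
  have hlow : IsLowerSet {i | j < l.parts i} := fun i i' hii' hi =>
    lt_of_lt_of_le hi (l.antitone i' i hii')
  exact Set.ext_iff.1 ((l.finite_setOf_lt_parts j).eq_Iio_ncard_of_isLowerSet hlow) i

lemma lt_parts_self_iff_lt_rank (i : ℕ) : i < l.parts i ↔ i < l.rank := by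
  have hlow : IsLowerSet {i | i < l.parts i} := fun i i' hii' hi =>
    lt_of_le_of_lt hii' (lt_of_lt_of_le hi (l.antitone i' i hii'))
  have hfin : {i | i < l.parts i}.Finite :=
    (l.finite_setOf_lt_parts 0).subset fun i hi => lt_of_le_of_lt (Nat.zero_le i) hi
  exact Set.ext_iff.1 (hfin.eq_Iio_ncard_of_isLowerSet hlow) i

lemma size_eq_sum_range {N : ℕ} (hN : ∀ k, N ≤ k → l.parts k = 0) :
    l.size = ∑ i ∈ range N, l.parts i := by
  have hcells : l.ycells = ↑((range N).biUnion
      fun i => (Icc 1 (l.parts i)).image fun j => (i + 1, j)) := by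
    ext ⟨i, j⟩
    simp only [ycells, Set.mem_ofPred_eq, coe_biUnion, Set.mem_iUnion, mem_coe,
      mem_image, mem_Icc, mem_range, Prod.mk.injEq]
    constructor
    · rintro ⟨hi, hj, hjl⟩
      refine ⟨i - 1, ?_, j, ⟨hj, hjl⟩, by omega, rfl⟩
      by_contra hiN
      have := hN (i - 1) (by omega)
      omega
    · rintro ⟨i, -, j, hj, rfl, rfl⟩
      simpa using hj
  rw [size, hcells, Set.ncard_coe_finset, card_biUnion]
  · refine sum_congr rfl fun i _ => ?_
    rw [card_image_of_injective _ fun x y h => by injection h, Nat.card_Icc,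
      Nat.add_sub_cancel]
  · intro x _ y _ hxy
    simp only [disjoint_left, mem_image]
    rintro _ ⟨j, -, rfl⟩ ⟨j', -, h⟩
    injection h
    omega

lemma rank_le {N : ℕ} (hN : ∀ k, N ≤ k → l.parts k = 0) : l.rank ≤ N := by
  by_contra h
  have := (l.lt_parts_self_iff_lt_rank N).2 (by omega)
  rw [hN N le_rfl] at this
  omega

lemma conj_le {N : ℕ} (hN : ∀ k, N ≤ k → l.parts k = 0) (j : ℕ) : l.conj j ≤ N := by
  by_contra h
  have := (l.lt_parts_iff_lt_conj N j).2 (by omega)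
  rw [hN N le_rfl] at this
  omega

/-- Both sides count the cells strictly below the diagonal, by rows and by columns. -/
lemma sum_range_min_eq_sum_range_conj {N : ℕ} (hN : ∀ k, N ≤ k → l.parts k = 0) :
    ∑ i ∈ range N, min i (l.parts i) = ∑ j ∈ range N, (l.conj j - (j + 1)) := by
  have hrow : ∀ i ∈ range N,
      min i (l.parts i) = ∑ j ∈ range N, if j < i ∧ j < l.parts i then 1 else 0 := by
    intro i hi
    rw [← card_filter, ← card_range (min i (l.parts i))]
    congr 1
    ext j
    simp only [mem_range, mem_filter] at hi ⊢
    omega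
  have hcol : ∀ j ∈ range N,
      ∑ i ∈ range N, (if j < i ∧ j < l.parts i then 1 else 0) = l.conj j - (j + 1) := by
    intro j _
    rw [← card_filter, ← Nat.card_Ico]
    congr 1
    ext i
    have := l.lt_parts_iff_lt_conj i j
    have := l.conj_le hN j
    simp only [mem_range, mem_filter, mem_Ico]
    omega
  rw [sum_congr rfl hrow, sum_comm, sum_congr rfl hcol]

lemma size_eq_sum_range_rank :
    l.size = ∑ i ∈ range l.rank, ((l.parts i - i) + (l.conj i - (i + 1))) := by
  obtain ⟨N, hN⟩ := l.finite
  have harm : ∀ i ∈ range N, i ∉ range l.rank → l.parts i - i = 0 := by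
    intro i _ hi
    have := (l.lt_parts_self_iff_lt_rank i).not.2 (by simpa using hi)
    omega
  have hleg : ∀ j ∈ range N, j ∉ range l.rank → l.conj j - (j + 1) = 0 := by
    intro j _ hj
    by_contra h
    have h1 := (l.lt_parts_iff_lt_conj (j + 1) j).2 (by omega)
    have h2 := (l.lt_parts_self_iff_lt_rank j).1 (h1.trans_le (l.antitone j (j + 1) (by omega)))
    simp_all
  calc l.size = ∑ i ∈ range N, ((l.parts i - i) + min i (l.parts i)) := by
        rw [l.size_eq_sum_range hN]
        exact sum_congr rfl fun i _ => by omega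
    _ = ∑ i ∈ range N, (l.parts i - i) + ∑ j ∈ range N, (l.conj j - (j + 1)) := by
        rw [sum_add_distrib, l.sum_range_min_eq_sum_range_conj hN]
    _ = _ := by
        rw [← sum_subset (range_subset_range.2 (l.rank_le hN)) harm,
          ← sum_subset (range_subset_range.2 (l.rank_le hN)) hleg, sum_add_distrib]

end Ptn

section Frobenius

variable {mu : Ptn} {r : ℕ} {g d : ℕ → ℕ}

lemma IsFrobenius.size_eq (h : IsFrobenius mu r g d) :
    mu.size = ∑ i ∈ range r, (g i + d i + 1) := by
  obtain ⟨hr, hg, hd⟩ := h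
  rw [mu.size_eq_sum_range_rank, hr]
  refine sum_congr rfl fun i hi => ?_
  rw [mem_range] at hi
  rw [hg i hi, hd i hi]
  omega

lemma IsFrobenius.parts_le {b : ℕ} (h : IsFrobenius mu r g d) (hb : 0 < r → g 0 + 1 ≤ b)
    (i : ℕ) : mu.parts i ≤ b := by
  refine le_trans (mu.antitone 0 i (Nat.zero_le i)) ?_
  rcases Nat.eq_zero_or_pos r with hr | hr
  · have := (mu.lt_parts_self_iff_lt_rank 0).not.2 (by rw [h.1]; omega)
    omega
  · rw [h.2.1 0 hr]
    exact hb hr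

lemma IsFrobenius.parts_eq_zero {a : ℕ} (h : IsFrobenius mu r g d) (ha : 0 < r → d 0 + 1 ≤ a)
    {i : ℕ} (hi : a ≤ i) : mu.parts i = 0 := by
  have hconj : mu.conj 0 ≤ a := by
    rcases Nat.eq_zero_or_pos r with hr | hr
    · by_contra hlt
      have h0 := (mu.lt_parts_iff_lt_conj 0 0).2 (by omega)
      have := (mu.lt_parts_self_iff_lt_rank 0).1 h0
      rw [h.1] at this
      omega
    · rw [h.2.2 0 hr]
      exact ha hr
  have := (mu.lt_parts_iff_lt_conj i 0).not.2 (by omega)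
  omega

end Frobenius

lemma IsComplementOf.size_add {a b : ℕ} {c l : Ptn} (h : IsComplementOf a b c l)
    (hb : ∀ i, l.parts i ≤ b) (ha : ∀ i, a ≤ i → l.parts i = 0) : c.size + l.size = a * b := by
  have hc : ∀ k, a ≤ k → c.parts k = 0 := fun k hk => by rw [h k, if_neg (by omega)]
  rw [c.size_eq_sum_range hc, l.size_eq_sum_range ha,
    sum_congr rfl fun k hk => by rw [h k, if_pos (mem_range.1 hk)],
    sum_range_reflect (fun k => b - l.parts k) a, ← sum_add_distrib,
    sum_congr rfl fun k _ => Nat.sub_add_cancel (hb k)]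
  simp

lemma Finset.sort_getD_mem (s : Finset ℕ) {i : ℕ} (h : i < s.card) :
    (s.sort (· ≤ ·)).getD i 0 ∈ s := by
  rw [List.getD_eq_getElem _ _ (by rwa [length_sort])]
  exact (mem_sort _).1 (List.getElem_mem _)

lemma Finset.sort_getD_mono (s : Finset ℕ) {i j : ℕ} (hij : i ≤ j) (h : j < s.card) :
    (s.sort (· ≤ ·)).getD i 0 ≤ (s.sort (· ≤ ·)).getD j 0 := by
  rw [List.getD_eq_getElem _ _ (by rw [length_sort]; omega),
    List.getD_eq_getElem _ _ (by rwa [length_sort])]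
  exact List.Pairwise.rel_get_of_le (pairwise_sort s (· ≤ ·)) hij

lemma IsBdryPtn.size_add_sum {a b : ℕ} {α β : Finset ℕ} {lam : Ptn} (hlam : IsBdryPtn a b α β lam)
    (hα : α ⊆ Icc 1 a) (hβ : β ⊆ Icc 1 b) (hcard : α.card = β.card) :
    lam.size + ∑ k ∈ range α.card,
        ((a - (α.sort (· ≤ ·)).getD k 0) + (b - (β.sort (· ≤ ·)).getD k 0) + 1) = a * b := by
  obtain ⟨mu, hF, hC⟩ := hlam
  have hb : 0 < α.card → b - (β.sort (· ≤ ·)).getD 0 0 + 1 ≤ b := fun h0 => by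
    have := mem_Icc.1 (hβ (β.sort_getD_mem (i := 0) (by omega)))
    omega
  have ha : 0 < α.card → a - (α.sort (· ≤ ·)).getD 0 0 + 1 ≤ a := fun h0 => by
    have := mem_Icc.1 (hα (α.sort_getD_mem h0))
    omega
  rw [← hC.size_add (hF.parts_le hb) fun i => hF.parts_eq_zero ha, hF.size_eq]
  exact congrArg _ (sum_congr rfl fun k _ => by omega)

namespace IsPathFT

variable {p : List (ℤ × ℤ)} {s t : ℤ × ℤ}

lemma ne_nil (h : IsPathFT p s t) : p ≠ [] := by
  rintro rfl
  simp [IsPathFT] at h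

lemma getD_zero (h : IsPathFT p s t) : p.getD 0 (0, 0) = s := by
  rw [List.getD_eq_getElem?_getD, ← List.head?_eq_getElem?, h.1, Option.getD_some]

lemma getD_length_sub_one (h : IsPathFT p s t) : p.getD (p.length - 1) (0, 0) = t := by
  rw [List.getD_eq_getElem?_getD, ← List.getLast?_eq_getElem?, h.2.1, Option.getD_some]

lemma isStep_getD (h : IsPathFT p s t) {l : ℕ} (hl : l + 1 < p.length) :
    IsStep (p.getD l (0, 0)) (p.getD (l + 1) (0, 0)) := by
  rw [List.getD_eq_getElem _ _ (by omega), List.getD_eq_getElem _ _ hl]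
  exact h.2.2.getElem l hl

lemma antitoneOn_fst (h : IsPathFT p s t) :
    AntitoneOn (fun l => (p.getD l (0, 0)).1) (Set.Iio p.length) :=
  antitoneOn_of_succ_le Set.ordConnected_Iio fun l _ _ hl => by
    rw [Set.mem_Iio, Order.succ_eq_add_one] at hl
    rw [Order.succ_eq_add_one]
    rcases h.isStep_getD hl with e | e <;> simp only [e] <;> omega

lemma monotoneOn_snd (h : IsPathFT p s t) :
    MonotoneOn (fun l => (p.getD l (0, 0)).2) (Set.Iio p.length) :=
  monotoneOn_of_le_succ Set.ordConnected_Iio fun l _ _ hl => by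
    rw [Set.mem_Iio, Order.succ_eq_add_one] at hl
    rw [Order.succ_eq_add_one]
    rcases h.isStep_getD hl with e | e <;> simp only [e] <;> omega

lemma content_getD (h : IsPathFT p s t) {l : ℕ} (hl : l < p.length) :
    (p.getD l (0, 0)).2 - (p.getD l (0, 0)).1 = s.2 - s.1 + l := by
  induction l with
  | zero => rw [h.getD_zero, Nat.cast_zero, add_zero]
  | succ l ih =>
    have := ih (by omega)
    rcases h.isStep_getD hl with e | e <;> rw [e] <;> push_cast <;> omega

lemma length_eq (h : IsPathFT p s t) : (p.length : ℤ) = (t.2 - t.1) - (s.2 - s.1) + 1 := by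
  have hpos := List.length_pos_iff.2 h.ne_nil
  have := h.content_getD (l := p.length - 1) (by omega)
  rw [h.getD_length_sub_one] at this
  push_cast [hpos] at this
  omega

lemma exists_getD_eq_of_mem (h : IsPathFT p s t) {v : ℤ × ℤ} (hv : v ∈ p) :
    ∃ l < p.length, p.getD l (0, 0) = v ∧ (l : ℤ) = (v.2 - v.1) - (s.2 - s.1) := by
  obtain ⟨l, hl, rfl⟩ := List.mem_iff_getElem.1 hv
  have := h.content_getD hl
  rw [List.getD_eq_getElem _ _ hl] at this
  exact ⟨l, hl, List.getD_eq_getElem _ _ hl, by omega⟩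

lemma bounds_of_mem (h : IsPathFT p s t) {v : ℤ × ℤ} (hv : v ∈ p) :
    t.1 ≤ v.1 ∧ v.1 ≤ s.1 ∧ s.2 ≤ v.2 ∧ v.2 ≤ t.2 := by
  obtain ⟨l, hl, rfl, -⟩ := h.exists_getD_eq_of_mem hv
  have hlast : p.length - 1 ∈ Set.Iio p.length := by simp; omega
  have h0 : 0 ∈ Set.Iio p.length := by simp; omega
  have hfst₁ := h.antitoneOn_fst hl hlast (by omega)
  have hfst₂ := h.antitoneOn_fst h0 hl (Nat.zero_le l)
  have hsnd₁ := h.monotoneOn_snd h0 hl (Nat.zero_le l)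
  have hsnd₂ := h.monotoneOn_snd hl hlast (by omega)
  simp only [h.getD_zero, h.getD_length_sub_one] at hfst₁ hfst₂ hsnd₁ hsnd₂
  exact ⟨hfst₁, hfst₂, hsnd₁, hsnd₂⟩

lemma eq_of_content_eq (h : IsPathFT p s t) {u w : ℤ × ℤ} (hu : u ∈ p) (hw : w ∈ p)
    (hc : u.2 - u.1 = w.2 - w.1) : u = w := by
  obtain ⟨l, -, rfl, hl⟩ := h.exists_getD_eq_of_mem hu
  obtain ⟨l', -, rfl, hl'⟩ := h.exists_getD_eq_of_mem hw
  rw [show l = l' by omega]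

lemma nodup (h : IsPathFT p s t) : p.Nodup :=
  List.nodup_iff_injective_get.2 fun ⟨l, hl⟩ ⟨l', hl'⟩ he => by
    have hc := h.content_getD hl
    have hc' := h.content_getD hl'
    rw [List.getD_eq_getElem _ _ hl] at hc
    rw [List.getD_eq_getElem _ _ hl'] at hc'
    simp only [List.get_eq_getElem] at he
    rw [he] at hc
    simp only [Fin.mk.injEq]
    omega

lemma exists_mem_content_eq (h : IsPathFT p s t) {d : ℤ} (hs : s.2 - s.1 ≤ d)
    (ht : d ≤ t.2 - t.1) : ∃ u ∈ p, u.2 - u.1 = d := by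
  have hl : (d - (s.2 - s.1)).toNat < p.length := by have := h.length_eq; omega
  refine ⟨p.getD _ (0, 0), ?_, h.content_getD hl |>.trans (by omega)⟩
  rw [List.getD_eq_getElem _ _ hl]
  exact List.getElem_mem hl

end IsPathFT

namespace Osc

variable {p q : List (ℤ × ℤ)}

lemma not_mem_of_osc {r : List (ℤ × ℤ)} (hpq : Osc p q) (hqr : Osc q r) {v : ℤ × ℤ} (hp : v ∈ p)
    (hq : v ∈ q) : v ∉ r := by
  intro hr
  obtain ⟨l, hl, hlv⟩ := List.mem_iff_getElem.1 hp
  obtain ⟨i, hi, hiv⟩ := List.mem_iff_getElem.1 hq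
  obtain ⟨j, hj, hjv⟩ := List.mem_iff_getElem.1 hr
  rw [← List.getD_eq_getElem _ (0, 0)] at hlv hiv hjv
  obtain ⟨hi0, -, hqprev, -⟩ := hqr i j hi hj (hiv.trans hjv.symm)
  obtain ⟨-, -, -, -, hqprev', -⟩ := hpq l i hl hi (hlv.trans hiv.symm)
  have := congrArg Prod.fst ((hqprev' hi0).symm.trans hqprev)
  rw [hlv, hiv] at this
  simp at this

lemma fst_le_of_content_eq {A BP BQ : ℤ} {tp tq : ℤ × ℤ} (hosc : Osc p q)
    (hp : IsPathFT p (A, BP) tp) (hq : IsPathFT q (A, BQ) tq) (hB : BP ≤ BQ) {u w : ℤ × ℤ}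
    (hu : u ∈ p) (hw : w ∈ q) (hc : u.2 - u.1 = w.2 - w.1) : u.1 ≤ w.1 := by
  obtain ⟨lp, hlp, rfl, hlpc⟩ := hp.exists_getD_eq_of_mem hu
  obtain ⟨lq, hlq, rfl, hlqc⟩ := hq.exists_getD_eq_of_mem hw
  have hidx : (lp : ℤ) = lq + (BQ - BP) := by dsimp only at hlpc hlqc; omega
  clear hu hw hc hlpc hlqc
  induction lq generalizing lp with
  | zero =>
    have h0 : (p.getD lp (0, 0)).1 ≤ (p.getD 0 (0, 0)).1 :=
      hp.antitoneOn_fst (by simp only [Set.mem_Iio]; omega) hlp (Nat.zero_le lp)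
    rw [hp.getD_zero] at h0
    rwa [hq.getD_zero]
  | succ n ih =>
    obtain ⟨m, rfl⟩ : ∃ m, lp = m + 1 := ⟨lp - 1, by omega⟩
    have hprev := ih m (by omega) (by omega) (by push_cast at hidx; omega)
    rcases hprev.lt_or_eq with hlt | heq
    · rcases hp.isStep_getD hlp with e | e <;> rcases hq.isStep_getD hlq with e' | e' <;>
        rw [e, e'] <;> dsimp only <;> omega
    · -- the paths meet at the previous step, where osculation fixes both next steps
      have hmeet : p.getD m (0, 0) = q.getD n (0, 0) := by
        have := hp.content_getD (l := m) (by omega)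
        have := hq.content_getD (l := n) (by omega)
        exact Prod.ext heq (by dsimp only at *; omega)
      obtain ⟨-, -, -, hpnext, -, hqnext⟩ := hosc m n (by omega) (by omega) hmeet
      rw [hpnext, hqnext hlq]
      dsimp only
      omega

end Osc

namespace IsOscTuple

variable {a b : ℕ} {α β : Finset ℕ} {P : List (List (ℤ × ℤ))}

lemma isPathFT (hP : IsOscTuple a b α β P) {k : ℕ} (hk : k < P.length) :
    IsPathFT (P.getD k []) ((a : ℤ), (((β.sort (· ≤ ·)).getD k 0 : ℕ) : ℤ))
      ((((α.sort (· ≤ ·)).getD k 0 : ℕ) : ℤ), (b : ℤ)) :=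
  hP.2.2.2.2.1 k hk

lemma osc (hP : IsOscTuple a b α β P) {k : ℕ} (hk : k + 1 < P.length) :
    Osc (P.getD k []) (P.getD (k + 1) []) :=
  hP.2.2.2.2.2 k hk

lemma alpha_mem_Icc (hP : IsOscTuple a b α β P) {k : ℕ} (hk : k < P.length) :
    (α.sort (· ≤ ·)).getD k 0 ∈ Icc 1 a :=
  hP.1 (α.sort_getD_mem (hP.2.2.2.1 ▸ hk))

lemma beta_mem_Icc (hP : IsOscTuple a b α β P) {k : ℕ} (hk : k < P.length) :
    (β.sort (· ≤ ·)).getD k 0 ∈ Icc 1 b :=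
  hP.2.1 (β.sort_getD_mem (hP.2.2.1 ▸ hP.2.2.2.1 ▸ hk))

lemma alpha_mono (hP : IsOscTuple a b α β P) {j k : ℕ} (hjk : j ≤ k) (hk : k < P.length) :
    (α.sort (· ≤ ·)).getD j 0 ≤ (α.sort (· ≤ ·)).getD k 0 :=
  α.sort_getD_mono hjk (hP.2.2.2.1 ▸ hk)

lemma beta_mono (hP : IsOscTuple a b α β P) {j k : ℕ} (hjk : j ≤ k) (hk : k < P.length) :
    (β.sort (· ≤ ·)).getD j 0 ≤ (β.sort (· ≤ ·)).getD k 0 :=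
  β.sort_getD_mono hjk (hP.2.2.1 ▸ hP.2.2.2.1 ▸ hk)

lemma mem_rectZ (hP : IsOscTuple a b α β P) {k : ℕ} (hk : k < P.length) {v : ℤ × ℤ}
    (hv : v ∈ P.getD k []) : v ∈ rectZ a b := by
  have := (hP.isPathFT hk).bounds_of_mem hv
  have := mem_Icc.1 (hP.alpha_mem_Icc hk)
  have := mem_Icc.1 (hP.beta_mem_Icc hk)
  simp only [rectZ, Set.mem_ofPred_eq]
  omega

lemma length_getD (hP : IsOscTuple a b α β P) {k : ℕ} (hk : k < P.length) :
    (P.getD k []).length =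
      (a - (α.sort (· ≤ ·)).getD k 0) + (b - (β.sort (· ≤ ·)).getD k 0) + 1 := by
  have := (hP.isPathFT hk).length_eq
  have := mem_Icc.1 (hP.alpha_mem_Icc hk)
  have := mem_Icc.1 (hP.beta_mem_Icc hk)
  dsimp only at *
  omega

lemma exists_mem_content_eq (hP : IsOscTuple a b α β P) {j k : ℕ} (hjk : j ≤ k)
    (hk : k < P.length) {w : ℤ × ℤ} (hw : w ∈ P.getD k []) :
    ∃ u ∈ P.getD j [], u.2 - u.1 = w.2 - w.1 := by
  have := (hP.isPathFT hk).bounds_of_mem hw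
  have := hP.alpha_mono hjk hk
  have := hP.beta_mono hjk hk
  dsimp only at *
  exact (hP.isPathFT (by omega)).exists_mem_content_eq (by dsimp only; omega) (by dsimp only; omega)

lemma fst_le_of_content_eq (hP : IsOscTuple a b α β P) {j k : ℕ} (hjk : j ≤ k)
    (hk : k < P.length) {u w : ℤ × ℤ} (hu : u ∈ P.getD j []) (hw : w ∈ P.getD k [])
    (hc : u.2 - u.1 = w.2 - w.1) : u.1 ≤ w.1 := by
  induction k, hjk using Nat.le_induction generalizing w with
  | base => exact le_of_eq (congrArg Prod.fst ((hP.isPathFT hk).eq_of_content_eq hu hw hc))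
  | succ k _ ih =>
    obtain ⟨w', hw', hc'⟩ := hP.exists_mem_content_eq (Nat.le_succ k) hk hw
    exact (ih (by omega) hw' (hc.trans hc'.symm)).trans
      ((hP.osc hk).fst_le_of_content_eq (hP.isPathFT (by omega)) (hP.isPathFT hk)
        (by exact_mod_cast hP.beta_mono (Nat.le_succ k) hk) hw' hw hc')

lemma mem_of_le_of_le (hP : IsOscTuple a b α β P) {j k k' : ℕ} (hkj : k ≤ j) (hjk' : j ≤ k')
    (hk' : k' < P.length) {v : ℤ × ℤ} (hv : v ∈ P.getD k []) (hv' : v ∈ P.getD k' []) :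
    v ∈ P.getD j [] := by
  obtain ⟨u, hu, hc⟩ := hP.exists_mem_content_eq hjk' hk' hv'
  have h₁ := hP.fst_le_of_content_eq hkj (by omega) hv hu hc.symm
  have h₂ := hP.fst_le_of_content_eq hjk' hk' hu hv' hc
  obtain rfl : u = v := Prod.ext (by omega) (by omega)
  exact hu

lemma le_succ_of_mem_of_mem (hP : IsOscTuple a b α β P) {k k' : ℕ} (hk' : k' < P.length)
    {v : ℤ × ℤ} (hv : v ∈ P.getD k []) (hv' : v ∈ P.getD k' []) : k' ≤ k + 1 := by
  by_contra! h
  exact Osc.not_mem_of_osc (hP.osc (by omega)) (hP.osc (by omega)) hv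
    (hP.mem_of_le_of_le (by omega) (by omega) hk' hv hv')
    (hP.mem_of_le_of_le (by omega) (by omega) hk' hv hv')

lemma passCount_le_two (hP : IsOscTuple a b α β P) (v : ℤ × ℤ) : passCount P v ≤ 2 := by
  by_contra! h
  have hfin : {k | k < P.length ∧ v ∈ P.getD k []}.Finite :=
    (Set.finite_Iio P.length).subset fun k hk => hk.1
  obtain ⟨i, j, k, hi, hj, hk, hij, hik, hjk⟩ := (Set.two_lt_ncard_iff hfin).1 h
  have := hP.le_succ_of_mem_of_mem hj.1 hi.2 hj.2
  have := hP.le_succ_of_mem_of_mem hi.1 hj.2 hi.2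
  have := hP.le_succ_of_mem_of_mem hk.1 hi.2 hk.2
  have := hP.le_succ_of_mem_of_mem hi.1 hk.2 hi.2
  have := hP.le_succ_of_mem_of_mem hk.1 hj.2 hk.2
  have := hP.le_succ_of_mem_of_mem hj.1 hk.2 hj.2
  omega

lemma sum_length_getD (hP : IsOscTuple a b α β P) :
    ∑ k ∈ range P.length, (P.getD k []).length = ∑ k ∈ range α.card,
      ((a - (α.sort (· ≤ ·)).getD k 0) + (b - (β.sort (· ≤ ·)).getD k 0) + 1) := by
  rw [← hP.2.2.2.1]
  exact sum_congr rfl fun _ hk => hP.length_getD (mem_range.1 hk)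

end IsOscTuple

lemma passCount_eq_card (P : List (List (ℤ × ℤ))) (v : ℤ × ℤ) :
    passCount P v = #{k ∈ range P.length | v ∈ P.getD k []} := by
  rw [passCount, ← Set.ncard_coe_finset]
  congr 1
  ext k
  simp

lemma sum_passCount_eq_sum_length (P : List (List (ℤ × ℤ))) {R : Finset (ℤ × ℤ)}
    (hR : ∀ k < P.length, ∀ v ∈ P.getD k [], v ∈ R)
    (hnodup : ∀ k < P.length, (P.getD k []).Nodup) :
    ∑ v ∈ R, passCount P v = ∑ k ∈ range P.length, (P.getD k []).length := by
  simp_rw [passCount_eq_card, card_filter]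
  rw [sum_comm]
  refine sum_congr rfl fun k hk => ?_
  rw [mem_range] at hk
  rw [← card_filter, ← List.toFinset_card_of_nodup (hnodup k hk)]
  congr 1
  ext v
  simpa using hR k hk v

lemma Finset.card_add_card_filter_eq_two {ι : Type*} (s : Finset ι) (f : ι → ℕ)
    (hf : ∀ i ∈ s, f i ≤ 2) : #s + #{i ∈ s | f i = 2} = #{i ∈ s | f i = 0} + ∑ i ∈ s, f i := by
  rw [card_filter, card_filter, card_eq_sum_ones, ← sum_add_distrib,
    ← sum_add_distrib]
  refine sum_congr rfl fun i hi => ?_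
  have := hf i hi
  split_ifs <;> omega

noncomputable def rectFinset (a b : ℕ) : Finset (ℤ × ℤ) := Icc 1 (a : ℤ) ×ˢ Icc 1 (b : ℤ)

lemma coe_rectFinset (a b : ℕ) : (rectFinset a b : Set (ℤ × ℤ)) = rectZ a b := by
  ext v
  simp only [rectFinset, rectZ, coe_product, coe_Icc, Set.mem_prod, Set.mem_Icc,
    Set.mem_ofPred_eq, and_assoc]

lemma card_rectFinset (a b : ℕ) : #(rectFinset a b) = a * b := by
  simp [rectFinset]

lemma ncard_sep_rectZ (a b : ℕ) (p : ℤ × ℤ → Prop) [DecidablePred p] :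
    {v ∈ rectZ a b | p v}.ncard = #{v ∈ rectFinset a b | p v} := by
  rw [← coe_rectFinset, ← Set.ncard_coe_finset, coe_filter]
  rfl

theorem statement13_general (a b : ℕ) (α β : Finset ℕ)
    (P : List (List (ℤ × ℤ))) (hP : IsOscTuple a b α β P)
    (lam : Ptn) (hlam : IsBdryPtn a b α β lam) :
    {v ∈ rectZ a b | passCount P v = 0}.ncard
        = lam.size + {v ∈ rectZ a b | passCount P v = 2}.ncard ∧
      (Zset a b P).ncard = lam.size + 2 * {v ∈ rectZ a b | passCount P v = 2}.ncard := by
  have hcount := (rectFinset a b).card_add_card_filter_eq_two (passCount P)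
    fun v _ => hP.passCount_le_two v
  rw [card_rectFinset, sum_passCount_eq_sum_length P
    (fun k hk v hv => by rw [← mem_coe, coe_rectFinset]; exact hP.mem_rectZ hk hv)
    (fun k hk => (hP.isPathFT hk).nodup), hP.sum_length_getD,
    ← hlam.size_add_sum hP.1 hP.2.1 hP.2.2.1] at hcount
  have hZ : (Zset a b P).ncard = #{v ∈ rectFinset a b | passCount P v = 0 ∨ passCount P v = 2} :=
    ncard_sep_rectZ a b _
  rw [filter_or, card_union_of_disjoint
    (disjoint_filter.2 fun v _ h0 h2 => by omega)] at hZ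
  rw [ncard_sep_rectZ, ncard_sep_rectZ, hZ]
  omega

/-- `|N(P)| = |λ_{a,b,α,β}| + χ(P)` and `|Z(P)| = |λ_{a,b,α,β}| + 2χ(P)`. -/
theorem statement13 (a b : ℕ) (ha : 0 < a) (hb : 0 < b) (α β : Finset ℕ)
    (P : List (List (ℤ × ℤ))) (hP : IsOscTuple a b α β P)
    (lam : Ptn) (hlam : IsBdryPtn a b α β lam) :
    {v ∈ rectZ a b | passCount P v = 0}.ncard
        = lam.size + {v ∈ rectZ a b | passCount P v = 2}.ncard ∧
      (Zset a b P).ncard = lam.size + 2 * {v ∈ rectZ a b | passCount P v = 2}.ncard :=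
  statement13_general a b α β P hP lam hlam
end
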